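/- arXiv:1804.08430 — 2 statements merged into one kernel-verified Lean document; each statement's English description precedes it below -/
import Mathlib

section
/- Every closed ball in the Gromov–Hausdorff space centered at the one-point metric space is convex in the weak sense: for any compact metric spaces X, Y with d_GH(Δ₁,X) ≤ r and d_GH(Δ₁,Y) ≤ r, there exists a geodesic γ: [0,1] → 𝓜 from X to Y (i.e., d_GH(γ(s),γ(t)) = |s−t|·d_GH(X,Y)) with d_GH(Δ₁, γ(t)) ≤ r for all t. -/
/-!
Let `R ⊆ X × Y` consist of the pairs at distance at most `d_GH(X, Y)` in an optimal coupling of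
`X` and `Y`: it projects onto both factors and has distortion at most `2 d_GH(X, Y)`. For
`0 < t < 1`, `R` with the metric `(1 - t) d_X + t d_Y` is a compact space `R_t`, and the
projections `R_t → X`, `R_t → Y` and the identity `R_s → R_t` are surjections of distortion at most
`2 t d_GH(X, Y)`, `2 (1 - t) d_GH(X, Y)` and `2 |s - t| d_GH(X, Y)`. Hence `t ↦ R_t`, completed by
`X` and `Y`, is `d_GH(X, Y)`-Lipschitz on `[0, 1]`, and so a geodesic by the triangle inequality.
It stays in the ball because `d_GH(Δ₁, Z) ≤ r` exactly when all distances in `Z` are at most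
`2 r`, and distances in `R_t` are convex combinations of distances in `X` and in `Y`.
-/

open GromovHausdorff Set Metric

section Geodesic

variable {M : Type*} [PseudoMetricSpace M] {γ : ℝ → M}

theorem dist_le_abs_sub_mul_of_forall_mem_Ioo {D : ℝ} (h01 : dist (γ 0) (γ 1) ≤ D)
    (h0 : ∀ t ∈ Ioo (0 : ℝ) 1, dist (γ 0) (γ t) ≤ t * D)
    (h1 : ∀ t ∈ Ioo (0 : ℝ) 1, dist (γ t) (γ 1) ≤ (1 - t) * D)
    (h : ∀ s ∈ Ioo (0 : ℝ) 1, ∀ t ∈ Ioo (0 : ℝ) 1, dist (γ s) (γ t) ≤ |s - t| * D)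
    {s t : ℝ} (hs : s ∈ Icc (0 : ℝ) 1) (ht : t ∈ Icc (0 : ℝ) 1) :
    dist (γ s) (γ t) ≤ |s - t| * D := by
  wlog hst : s ≤ t generalizing s t
  · rw [dist_comm, abs_sub_comm]
    exact this ht hs (le_of_not_ge hst)
  rcases hs.1.eq_or_lt with rfl | hs₀
  · rw [zero_sub, abs_neg, abs_of_nonneg ht.1]
    rcases ht.1.eq_or_lt with rfl | ht₀
    · simp
    rcases ht.2.eq_or_lt with rfl | ht₁
    · simpa using h01
    exact h0 t ⟨ht₀, ht₁⟩
  rcases ht.2.eq_or_lt with rfl | ht₁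
  · rw [abs_sub_comm, abs_of_nonneg (sub_nonneg.2 hs.2)]
    rcases hs.2.eq_or_lt with rfl | hs₁
    · simp
    exact h1 s ⟨hs₀, hs₁⟩
  exact h s ⟨hs₀, hst.trans_lt ht₁⟩ t ⟨hs₀.trans_le hst, ht₁⟩

theorem dist_eq_abs_sub_mul_of_dist_le {s t : ℝ} (hs : s ∈ Icc (0 : ℝ) 1) (ht : t ∈ Icc (0 : ℝ) 1)
    (h : ∀ s ∈ Icc (0 : ℝ) 1, ∀ t ∈ Icc (0 : ℝ) 1,
      dist (γ s) (γ t) ≤ |s - t| * dist (γ 0) (γ 1)) :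
    dist (γ s) (γ t) = |s - t| * dist (γ 0) (γ 1) := by
  wlog hst : s ≤ t generalizing s t
  · rw [dist_comm, abs_sub_comm]
    exact this ht hs (le_of_not_ge hst)
  have h₀ : (0 : ℝ) ∈ Icc (0 : ℝ) 1 := left_mem_Icc.2 zero_le_one
  have h₁ : (1 : ℝ) ∈ Icc (0 : ℝ) 1 := right_mem_Icc.2 zero_le_one
  have hs' := h 0 h₀ s hs
  have ht' := h t ht 1 h₁
  rw [zero_sub, abs_neg, abs_of_nonneg hs.1] at hs'
  rw [abs_sub_comm, abs_of_nonneg (sub_nonneg.2 ht.2)] at ht'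
  refine le_antisymm (h s hs t ht) ?_
  rw [abs_sub_comm, abs_of_nonneg (sub_nonneg.2 hst)]
  linarith [dist_triangle4 (γ 0) (γ s) (γ t) (γ 1)]

end Geodesic

theorem Metric.exists_dist_le_hausdorffDist {Z : Type*} [PseudoMetricSpace Z] {s t : Set Z}
    {x : Z} (hx : x ∈ s) (hs : Bornology.IsBounded s) (ht : IsCompact t) (ht' : t.Nonempty) :
    ∃ y ∈ t, dist x y ≤ hausdorffDist s t := by
  obtain ⟨y, hy, hxy⟩ := ht.exists_infDist_eq_dist ht' x
  refine ⟨y, hy, hxy ▸ infDist_le_hausdorffDist_of_mem hx ?_⟩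
  exact hausdorffEDist_ne_top_of_nonempty_of_bounded ⟨x, hx⟩ ht' hs ht.isBounded

namespace GromovHausdorff

section

variable {X Y : Type*} [MetricSpace X] [CompactSpace X] [Nonempty X]
  [MetricSpace Y] [CompactSpace Y] [Nonempty Y]

theorem ghDist_le_of_surjective {f : X → Y} (hf : Function.Surjective f) {ε : ℝ}
    (h : ∀ a b, |dist a b - dist (f a) (f b)| ≤ 2 * ε) : ghDist X Y ≤ ε := by
  have := ghDist_le_of_approx_subsets (fun x : (univ : Set X) => f x) (ε₁ := 0) (ε₃ := 0)
    (fun x => ⟨x, mem_univ x, (dist_self x).le⟩)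
    (fun y => (hf y).elim fun x hx => ⟨⟨x, mem_univ x⟩, by simp [hx]⟩) (fun a b => h a b)
  linarith

theorem dist_le_two_mul_ghDist_punit (x x' : X) : dist x x' ≤ 2 * ghDist PUnit X := by
  obtain ⟨Φ, Ψ, hΦ, hΨ, hD⟩ := ghDist_eq_hausdorffDist PUnit X
  have hΨΦ (z : X) : dist (Ψ z) (Φ PUnit.unit) ≤ ghDist PUnit X := by
    obtain ⟨_, ⟨u, rfl⟩, hu⟩ := exists_dist_le_hausdorffDist (mem_range_self z)
      (isCompact_range hΨ.continuous).isBounded (isCompact_range hΦ.continuous) (range_nonempty Φ)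
    rwa [hausdorffDist_comm, ← hD] at hu
  calc dist x x' = dist (Ψ x) (Ψ x') := (hΨ.dist_eq x x').symm
    _ ≤ dist (Ψ x) (Φ PUnit.unit) + dist (Ψ x') (Φ PUnit.unit) := dist_triangle_right _ _ _
    _ ≤ 2 * ghDist PUnit X := by linarith [hΨΦ x, hΨΦ x']

theorem ghDist_punit_le {r : ℝ} (h : ∀ x x' : X, dist x x' ≤ 2 * r) : ghDist PUnit X ≤ r := by
  rw [ghDist, dist_comm]
  exact ghDist_le_of_surjective (f := fun _ : X => PUnit.unit)
    (fun _ => ⟨Classical.arbitrary X, rfl⟩) fun a b => by simpa [abs_of_nonneg] using h a b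

end

section OptimalCorrespondence

variable (X Y : Type*) [MetricSpace X] [CompactSpace X] [Nonempty X]
  [MetricSpace Y] [CompactSpace Y] [Nonempty Y]

def optimalCorrespondence : Set (X × Y) :=
  {p | dist (optimalGHInjl X Y p.1) (optimalGHInjr X Y p.2) ≤ ghDist X Y}

variable {X Y}

theorem exists_mem_optimalCorrespondence_left (x : X) :
    ∃ y, (x, y) ∈ optimalCorrespondence X Y := by
  obtain ⟨_, ⟨y, rfl⟩, hy⟩ := exists_dist_le_hausdorffDist (mem_range_self x)
    (isCompact_range (isometry_optimalGHInjl X Y).continuous).isBounded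
    (isCompact_range (isometry_optimalGHInjr X Y).continuous) (range_nonempty _)
  rw [hausdorffDist_optimal] at hy
  exact ⟨y, hy⟩

theorem exists_mem_optimalCorrespondence_right (y : Y) :
    ∃ x, (x, y) ∈ optimalCorrespondence X Y := by
  obtain ⟨_, ⟨x, rfl⟩, hx⟩ := exists_dist_le_hausdorffDist (mem_range_self y)
    (isCompact_range (isometry_optimalGHInjr X Y).continuous).isBounded
    (isCompact_range (isometry_optimalGHInjl X Y).continuous) (range_nonempty _)
  rw [hausdorffDist_comm, hausdorffDist_optimal, dist_comm] at hx
  exact ⟨x, hx⟩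

theorem abs_dist_sub_dist_le_of_mem_optimalCorrespondence {p q : X × Y}
    (hp : p ∈ optimalCorrespondence X Y) (hq : q ∈ optimalCorrespondence X Y) :
    |dist p.1 q.1 - dist p.2 q.2| ≤ 2 * ghDist X Y := by
  have := dist_dist_dist_le (optimalGHInjl X Y p.1) (optimalGHInjl X Y q.1)
    (optimalGHInjr X Y p.2) (optimalGHInjr X Y q.2)
  rw [(isometry_optimalGHInjl X Y).dist_eq, (isometry_optimalGHInjr X Y).dist_eq,
    Real.dist_eq] at this
  linarith [hp.out, hq.out]

theorem isClosed_optimalCorrespondence : IsClosed (optimalCorrespondence X Y) :=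
  isClosed_le (((isometry_optimalGHInjl X Y).continuous.comp continuous_fst).dist
    ((isometry_optimalGHInjr X Y).continuous.comp continuous_snd)) continuous_const

instance : CompactSpace (optimalCorrespondence X Y) :=
  isCompact_iff_compactSpace.1 isClosed_optimalCorrespondence.isCompact

instance : Nonempty (optimalCorrespondence X Y) :=
  let ⟨_, hy⟩ := exists_mem_optimalCorrespondence_left (Classical.arbitrary X)
  ⟨⟨_, hy⟩⟩

end OptimalCorrespondence

/-- The parameter is kept in `(0, 1)`, where `(1 - t) d_X + t d_Y` separates points; the
endpoints of the geodesic are `X` and `Y` themselves. -/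
@[ext]
structure Interpolant {X Y : Type*} (R : Set (X × Y)) (t : Ioo (0 : ℝ) 1) where
  point : X × Y
  mem : point ∈ R

namespace Interpolant

variable {X Y : Type*} [MetricSpace X] [MetricSpace Y] {R : Set (X × Y)} {t : Ioo (0 : ℝ) 1}

noncomputable instance : MetricSpace (Interpolant R t) where
  dist p q := (1 - t) * dist p.point.1 q.point.1 + t * dist p.point.2 q.point.2
  dist_self p := by simp
  dist_comm p q := by simp only [dist_comm]
  dist_triangle p q u := by
    have h₀ : (0 : ℝ) ≤ t := t.2.1.le
    have h₁ : (0 : ℝ) ≤ 1 - t := sub_nonneg.2 t.2.2.le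
    calc _ ≤ (1 - t) * (dist p.point.1 q.point.1 + dist q.point.1 u.point.1) +
          t * (dist p.point.2 q.point.2 + dist q.point.2 u.point.2) := by
          gcongr <;> exact dist_triangle _ _ _
      _ = _ := by ring
  eq_of_dist_eq_zero {p q} h := by
    obtain ⟨h₁, h₂⟩ := (add_eq_zero_iff_of_nonneg (mul_nonneg (sub_nonneg.2 t.2.2.le) dist_nonneg)
      (mul_nonneg t.2.1.le dist_nonneg)).1 h
    exact Interpolant.ext (Prod.ext
      (dist_eq_zero.1 ((mul_eq_zero.1 h₁).resolve_left (sub_ne_zero.2 t.2.2.ne')))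
      (dist_eq_zero.1 ((mul_eq_zero.1 h₂).resolve_left t.2.1.ne')))

theorem dist_def (p q : Interpolant R t) :
    dist p q = (1 - t) * dist p.point.1 q.point.1 + t * dist p.point.2 q.point.2 :=
  rfl

theorem lipschitzWith_one_mk : LipschitzWith 1 fun p : R => (⟨p.1, p.2⟩ : Interpolant R t) :=
  LipschitzWith.of_dist_le_mul fun p q => by
    have h₀ : (0 : ℝ) ≤ t := t.2.1.le
    have h₁ : (0 : ℝ) ≤ 1 - t := sub_nonneg.2 t.2.2.le
    rw [NNReal.coe_one, one_mul, Subtype.dist_eq, Prod.dist_eq, dist_def]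
    calc _ ≤ (1 - t) * max (dist p.1.1 q.1.1) (dist p.1.2 q.1.2) +
          t * max (dist p.1.1 q.1.1) (dist p.1.2 q.1.2) := by
          gcongr
          exacts [le_max_left _ _, le_max_right _ _]
      _ = _ := by ring

instance [CompactSpace R] : CompactSpace (Interpolant R t) :=
  Function.Surjective.compactSpace lipschitzWith_one_mk.continuous
    fun p => ⟨⟨p.point, p.mem⟩, rfl⟩

instance [Nonempty R] : Nonempty (Interpolant R t) :=
  let ⟨p⟩ := ‹Nonempty R›
  ⟨⟨p.1, p.2⟩⟩

theorem dist_le {r : ℝ} (hX : ∀ x x' : X, dist x x' ≤ r) (hY : ∀ y y' : Y, dist y y' ≤ r)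
    (p q : Interpolant R t) : dist p q ≤ r := by
  have h₀ : (0 : ℝ) ≤ t := t.2.1.le
  have h₁ : (0 : ℝ) ≤ 1 - t := sub_nonneg.2 t.2.2.le
  calc dist p q ≤ (1 - t) * r + t * r := by
        rw [dist_def]
        gcongr
        exacts [hX _ _, hY _ _]
    _ = r := by ring

end Interpolant

section

variable {X Y : Type*} [MetricSpace X] [MetricSpace Y] {R : Set (X × Y)} [CompactSpace R]
  [Nonempty R] {ε : ℝ}

theorem ghDist_interpolant_left_le [CompactSpace X] [Nonempty X] (t : Ioo (0 : ℝ) 1)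
    (hR : ∀ p ∈ R, ∀ q ∈ R, |dist p.1 q.1 - dist p.2 q.2| ≤ 2 * ε)
    (hl : ∀ x, ∃ y, (x, y) ∈ R) : ghDist (Interpolant R t) X ≤ t * ε := by
  refine ghDist_le_of_surjective (f := fun p => p.point.1)
    (fun x => (hl x).elim fun y hy => ⟨⟨(x, y), hy⟩, rfl⟩) fun p q => ?_
  calc |dist p q - dist p.point.1 q.point.1|
      = t * |dist p.point.2 q.point.2 - dist p.point.1 q.point.1| := by
        rw [Interpolant.dist_def, ← abs_of_pos t.2.1, ← abs_mul, abs_of_pos t.2.1]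
        congr 1
        ring
    _ ≤ 2 * (t * ε) := by
        rw [abs_sub_comm]
        nlinarith [hR _ p.mem _ q.mem, t.2.1]

theorem ghDist_interpolant_right_le [CompactSpace Y] [Nonempty Y] (t : Ioo (0 : ℝ) 1)
    (hR : ∀ p ∈ R, ∀ q ∈ R, |dist p.1 q.1 - dist p.2 q.2| ≤ 2 * ε)
    (hr : ∀ y, ∃ x, (x, y) ∈ R) : ghDist (Interpolant R t) Y ≤ (1 - t) * ε := by
  refine ghDist_le_of_surjective (f := fun p => p.point.2)
    (fun y => (hr y).elim fun x hx => ⟨⟨(x, y), hx⟩, rfl⟩) fun p q => ?_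
  have ht : (0 : ℝ) < 1 - t := sub_pos.2 t.2.2
  calc |dist p q - dist p.point.2 q.point.2|
      = (1 - t) * |dist p.point.1 q.point.1 - dist p.point.2 q.point.2| := by
        rw [Interpolant.dist_def, ← abs_of_pos ht, ← abs_mul, abs_of_pos ht]
        congr 1
        ring
    _ ≤ 2 * ((1 - t) * ε) := by nlinarith [hR _ p.mem _ q.mem]

theorem ghDist_interpolant_interpolant_le (s t : Ioo (0 : ℝ) 1)
    (hR : ∀ p ∈ R, ∀ q ∈ R, |dist p.1 q.1 - dist p.2 q.2| ≤ 2 * ε) :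
    ghDist (Interpolant R s) (Interpolant R t) ≤ |(s : ℝ) - t| * ε := by
  refine ghDist_le_of_surjective (f := fun p => (⟨p.point, p.mem⟩ : Interpolant R t))
    (fun p => ⟨⟨p.point, p.mem⟩, rfl⟩) fun p q => ?_
  calc |dist p q - dist (⟨p.point, p.mem⟩ : Interpolant R t) ⟨q.point, q.mem⟩|
      = |(s : ℝ) - t| * |dist p.point.2 q.point.2 - dist p.point.1 q.point.1| := by
        rw [Interpolant.dist_def, Interpolant.dist_def, ← abs_mul]
        congr 1
        ring
    _ ≤ 2 * (|(s : ℝ) - t| * ε) := by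
        rw [abs_sub_comm (dist p.point.2 _)]
        nlinarith [hR _ p.mem _ q.mem, abs_nonneg ((s : ℝ) - t)]

end

end GromovHausdorff

open GromovHausdorff

theorem ball_at_onePoint_weakly_convex_general (r : ℝ)
    (X Y : Type*) [MetricSpace X] [CompactSpace X] [Nonempty X]
    [MetricSpace Y] [CompactSpace Y] [Nonempty Y]
    (hX : GromovHausdorff.ghDist PUnit X ≤ r) (hY : GromovHausdorff.ghDist PUnit Y ≤ r) :
    ∃ γ : ℝ → GromovHausdorff.GHSpace,
      γ 0 = GromovHausdorff.toGHSpace X ∧ γ 1 = GromovHausdorff.toGHSpace Y ∧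
      (∀ s ∈ Icc (0 : ℝ) 1, ∀ t ∈ Icc (0 : ℝ) 1,
        dist (γ s) (γ t) = |s - t| * GromovHausdorff.ghDist X Y) ∧
      (∀ t ∈ Icc (0 : ℝ) 1, dist (GromovHausdorff.toGHSpace PUnit) (γ t) ≤ r) := by
  let R := optimalCorrespondence X Y
  have hR (p) (hp : p ∈ R) (q) (hq : q ∈ R) :=
    abs_dist_sub_dist_le_of_mem_optimalCorrespondence hp hq
  let γ (t : ℝ) : GHSpace :=
    if ht : t ∈ Ioo (0 : ℝ) 1 then toGHSpace (Interpolant R ⟨t, ht⟩)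
    else if t ≤ 0 then toGHSpace X else toGHSpace Y
  have hγ0 : γ 0 = toGHSpace X := by simp [γ]
  have hγ1 : γ 1 = toGHSpace Y := by simp [γ]
  have hγ (t : ℝ) (ht : t ∈ Ioo (0 : ℝ) 1) : γ t = toGHSpace (Interpolant R ⟨t, ht⟩) := dif_pos ht
  have hγ01 : dist (γ 0) (γ 1) = ghDist X Y := by rw [hγ0, hγ1]; rfl
  have hγ_le : ∀ s ∈ Icc (0 : ℝ) 1, ∀ t ∈ Icc (0 : ℝ) 1,
      dist (γ s) (γ t) ≤ |s - t| * dist (γ 0) (γ 1) := by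
    rw [hγ01]
    refine fun s hs t ht => dist_le_abs_sub_mul_of_forall_mem_Ioo hγ01.le ?_ ?_ ?_ hs ht
    · intro u hu
      rw [hγ0, hγ u hu, dist_comm]
      exact ghDist_interpolant_left_le ⟨u, hu⟩ hR exists_mem_optimalCorrespondence_left
    · intro u hu
      rw [hγ1, hγ u hu]
      exact ghDist_interpolant_right_le ⟨u, hu⟩ hR exists_mem_optimalCorrespondence_right
    · intro u hu v hv
      rw [hγ u hu, hγ v hv]
      exact ghDist_interpolant_interpolant_le ⟨u, hu⟩ ⟨v, hv⟩ hR
  have hX' (x x' : X) : dist x x' ≤ 2 * r := (dist_le_two_mul_ghDist_punit x x').trans (by linarith)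
  have hY' (y y' : Y) : dist y y' ≤ 2 * r := (dist_le_two_mul_ghDist_punit y y').trans (by linarith)
  refine ⟨γ, hγ0, hγ1, fun s hs t ht => ?_, fun t _ => ?_⟩
  · rw [dist_eq_abs_sub_mul_of_dist_le hs ht hγ_le, hγ01]
  · simp only [γ]
    split_ifs
    exacts [ghDist_punit_le (Interpolant.dist_le hX' hY'), ghDist_punit_le hX',
      ghDist_punit_le hY']

/-- Any closed ball centered at the one-point space in the Gromov–Hausdorff space is
convex in the weak sense. -/
theorem ball_at_onePoint_weakly_convex (r : ℝ) (hr : 0 < r)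
    (X Y : Type*) [MetricSpace X] [CompactSpace X] [Nonempty X]
    [MetricSpace Y] [CompactSpace Y] [Nonempty Y]
    (hX : GromovHausdorff.ghDist PUnit X ≤ r) (hY : GromovHausdorff.ghDist PUnit Y ≤ r) :
    ∃ γ : ℝ → GromovHausdorff.GHSpace,
      γ 0 = GromovHausdorff.toGHSpace X ∧ γ 1 = GromovHausdorff.toGHSpace Y ∧
      (∀ s ∈ Icc (0 : ℝ) 1, ∀ t ∈ Icc (0 : ℝ) 1,
        dist (γ s) (γ t) = |s - t| * GromovHausdorff.ghDist X Y) ∧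
      (∀ t ∈ Icc (0 : ℝ) 1, dist (GromovHausdorff.toGHSpace PUnit) (γ t) ≤ r) :=
  ball_at_onePoint_weakly_convex_general r X Y hX hY
end

section
/- For r > 0, every correspondence R between B = {0,2r} ⊂ ℝ and A = [0,2r] ⊂ ℝ has distortion dis R = 2r. In particular every correspondence between A and B is optimal. -/
open GromovHausdorff Set

def IsCorrespondence {X Y : Type*} (R : Set (X × Y)) : Prop :=
  (∀ x : X, ∃ y : Y, (x, y) ∈ R) ∧ (∀ y : Y, ∃ x : X, (x, y) ∈ R)

noncomputable def distortion {X Y : Type*} [MetricSpace X] [MetricSpace Y]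
    (σ : Set (X × Y)) : ℝ :=
  sSup {d : ℝ | ∃ p ∈ σ, ∃ q ∈ σ, d = |dist p.1 q.1 - dist p.2 q.2|}

/-!
Every term of the distortion compares two distances in `[0, 2r]`, so `dis R ≤ 2r`. Conversely the
fibres of `R` over `0` and over `2r` cover the connected interval `[0, 2r]`, so they contain points
`s`, `t` with `|s - t|` arbitrarily small, and the pairs `(0, s)`, `(2r, t)` have distortion close
to `2r`.

For the Gromov–Hausdorff distance, `{0, 2r}` lies within Hausdorff distance `r` of `[0, 2r]` in `ℝ`.
Conversely, two isometric copies at Hausdorff distance `< δ` induce a correspondence (pair points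
at distance `< δ`) of distortion `≤ 2δ`; since every correspondence has distortion `2r`, `r ≤ δ`.
-/

open Metric

lemma exists_dist_lt_of_univ_subset_union {Z : Type*} [MetricSpace Z] [PreconnectedSpace Z]
    {S T : Set Z} (hS : S.Nonempty) (hT : T.Nonempty) (hST : univ ⊆ S ∪ T)
    {ε : ℝ} (hε : 0 < ε) : ∃ s ∈ S, ∃ t ∈ T, dist s t < ε := by
  -- the closures of `S` and `T` are closed, cover the space, and so must meet
  obtain ⟨z, -, hzS, hzT⟩ := isPreconnected_closed_iff.1 isPreconnected_univ _ _
    isClosed_closure isClosed_closure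
    (hST.trans (union_subset_union subset_closure subset_closure))
    (by simpa using hS.mono subset_closure) (by simpa using hT.mono subset_closure)
  obtain ⟨s, hs, hzs⟩ := mem_closure_iff.1 hzS (ε / 2) (half_pos hε)
  obtain ⟨t, ht, hzt⟩ := mem_closure_iff.1 hzT (ε / 2) (half_pos hε)
  exact ⟨s, hs, t, ht, (dist_triangle_left s t z).trans_lt (by linarith)⟩

section Distortion

variable {X Y : Type*} [MetricSpace X] [MetricSpace Y]

lemma distortion_le {σ : Set (X × Y)} (hσ : σ.Nonempty) {c : ℝ}
    (h : ∀ p ∈ σ, ∀ q ∈ σ, |dist p.1 q.1 - dist p.2 q.2| ≤ c) : distortion σ ≤ c := by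
  obtain ⟨p, hp⟩ := hσ
  refine csSup_le ⟨_, p, hp, p, hp, rfl⟩ ?_
  rintro _ ⟨p, hp, q, hq, rfl⟩
  exact h p hp q hq

lemma le_distortion {σ : Set (X × Y)} {c : ℝ}
    (h : ∀ p ∈ σ, ∀ q ∈ σ, |dist p.1 q.1 - dist p.2 q.2| ≤ c) {p q : X × Y}
    (hp : p ∈ σ) (hq : q ∈ σ) : |dist p.1 q.1 - dist p.2 q.2| ≤ distortion σ := by
  refine le_csSup ⟨c, ?_⟩ ⟨p, hp, q, hq, rfl⟩
  rintro _ ⟨p, hp, q, hq, rfl⟩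
  exact h p hp q hq

lemma distortion_eq_dist_of_forall_eq_or_eq [PreconnectedSpace Y] {x₀ x₁ : X}
    (hX : ∀ x, x = x₀ ∨ x = x₁) (hY : ∀ y y' : Y, dist y y' ≤ dist x₀ x₁)
    {R : Set (X × Y)} (hR : IsCorrespondence R) :
    distortion R = dist x₀ x₁ := by
  have hdX : ∀ x x' : X, dist x x' ≤ dist x₀ x₁ := by
    intro x x'
    rcases hX x with rfl | rfl <;> rcases hX x' with rfl | rfl <;> simp [dist_comm]
  have hbound : ∀ p ∈ R, ∀ q ∈ R, |dist p.1 q.1 - dist p.2 q.2| ≤ dist x₀ x₁ :=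
    fun p _ q _ => abs_sub_le_of_nonneg_of_le dist_nonneg (hdX _ _) dist_nonneg (hY _ _)
  obtain ⟨y₀, hy₀⟩ := hR.1 x₀
  obtain ⟨y₁, hy₁⟩ := hR.1 x₁
  refine le_antisymm (distortion_le ⟨_, hy₀⟩ hbound) (le_of_forall_sub_le fun ε hε => ?_)
  obtain ⟨s, hs, t, ht, hst⟩ := exists_dist_lt_of_univ_subset_union
    (S := {y | (x₀, y) ∈ R}) (T := {y | (x₁, y) ∈ R}) ⟨y₀, hy₀⟩ ⟨y₁, hy₁⟩
    (fun y _ => by rcases hR.2 y with ⟨x, hx⟩; rcases hX x with rfl | rfl <;> simp [hx]) hε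
  calc dist x₀ x₁ - ε ≤ |dist x₀ x₁ - dist s t| := by
        linarith [le_abs_self (dist x₀ x₁ - dist s t)]
    _ ≤ distortion R := le_distortion hbound (p := (x₀, s)) (q := (x₁, t)) hs ht

end Distortion

lemma exists_isCorrespondence_distortion_le_of_ghDist_lt {X Y : Type*}
    [MetricSpace X] [CompactSpace X] [Nonempty X] [MetricSpace Y] [CompactSpace Y] [Nonempty Y]
    {δ : ℝ} (hδ : ghDist X Y < δ) :
    ∃ R : Set (X × Y), IsCorrespondence R ∧ distortion R ≤ 2 * δ := by
  set Φ := optimalGHInjl X Y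
  set Ψ := optimalGHInjr X Y
  have hΦ : Isometry Φ := isometry_optimalGHInjl X Y
  have hΨ : Isometry Ψ := isometry_optimalGHInjr X Y
  have hH : hausdorffDist (range Φ) (range Ψ) < δ := hausdorffDist_optimal.trans_lt hδ
  have hfin : hausdorffEDist (range Φ) (range Ψ) ≠ ⊤ :=
    hausdorffEDist_ne_top_of_nonempty_of_bounded (range_nonempty _) (range_nonempty _)
      (isCompact_range hΦ.continuous).isBounded (isCompact_range hΨ.continuous).isBounded
  have hR : IsCorrespondence {p : X × Y | dist (Φ p.1) (Ψ p.2) < δ} := by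
    refine ⟨fun x => ?_, fun y => ?_⟩
    · obtain ⟨_, ⟨y, rfl⟩, hy⟩ := exists_dist_lt_of_hausdorffDist_lt (mem_range_self x) hH hfin
      exact ⟨y, hy⟩
    · obtain ⟨_, ⟨x, rfl⟩, hx⟩ := exists_dist_lt_of_hausdorffDist_lt' (mem_range_self y) hH hfin
      exact ⟨x, hx⟩
  obtain ⟨y, hy⟩ := hR.1 (Classical.arbitrary X)
  refine ⟨_, hR, distortion_le ⟨_, hy⟩ fun p hp q hq => ?_⟩
  have hp : dist (Φ p.1) (Ψ p.2) < δ := hp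
  have hq : dist (Φ q.1) (Ψ q.2) < δ := hq
  rw [← hΦ.dist_eq, ← hΨ.dist_eq, ← Real.dist_eq]
  calc dist (dist (Φ p.1) (Φ q.1)) (dist (Ψ p.2) (Ψ q.2))
      ≤ dist (Φ p.1) (Ψ p.2) + dist (Φ q.1) (Ψ q.2) := dist_dist_dist_le _ _ _ _
    _ ≤ 2 * δ := by linarith

lemma ghDist_le_hausdorffDist_of_subsets {Z : Type*} [MetricSpace Z] {s t : Set Z}
    [CompactSpace s] [Nonempty s] [CompactSpace t] [Nonempty t] :
    ghDist s t ≤ hausdorffDist s t := by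
  simpa only [Subtype.range_coe] using
    ghDist_le_hausdorffDist (isometry_subtype_coe (s := s)) (isometry_subtype_coe (s := t))

lemma Real.hausdorffDist_pair_Icc_le {a b : ℝ} (hab : a ≤ b) :
    hausdorffDist {a, b} (Icc a b) ≤ (b - a) / 2 := by
  refine hausdorffDist_le_of_mem_dist (by linarith) ?_ fun y hy => ?_
  · rintro x (rfl | rfl)
    · exact ⟨x, left_mem_Icc.2 hab, by simp; linarith⟩
    · exact ⟨x, right_mem_Icc.2 hab, by simp; linarith⟩
  · rw [mem_Icc] at hy
    rcases le_total y ((a + b) / 2) with h | h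
    · exact ⟨a, by simp, by rw [Real.dist_eq, abs_of_nonneg] <;> linarith⟩
    · exact ⟨b, by simp, by rw [Real.dist_eq, abs_of_nonpos] <;> linarith⟩

theorem distortion_correspondence_pair_Icc (r : ℝ) (hr : 0 < r)
    (R : Set (↥({0, 2 * r} : Set ℝ) × ↥(Set.Icc (0 : ℝ) (2 * r))))
    (hR : IsCorrespondence R) :
    distortion R = 2 * r ∧
    @GromovHausdorff.ghDist ↥({0, 2 * r} : Set ℝ) ↥(Set.Icc (0 : ℝ) (2 * r)) _
      (Set.Nonempty.to_subtype ⟨0, by simp⟩)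
      (isCompact_iff_compactSpace.mp ((Set.toFinite ({0, 2 * r} : Set ℝ)).isCompact)) _
      (Set.Nonempty.to_subtype ⟨0, by constructor <;> nlinarith⟩)
      (isCompact_iff_compactSpace.mp isCompact_Icc) = distortion R / 2 := by
  have : PreconnectedSpace (Icc (0 : ℝ) (2 * r)) := Subtype.preconnectedSpace isPreconnected_Icc
  have : Nonempty ({0, 2 * r} : Set ℝ) := ⟨⟨0, by simp⟩⟩
  have : Nonempty (Icc (0 : ℝ) (2 * r)) := ⟨⟨0, by simp; linarith⟩⟩
  have : CompactSpace ({0, 2 * r} : Set ℝ) :=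
    isCompact_iff_compactSpace.mp (Set.toFinite _).isCompact
  have : CompactSpace (Icc (0 : ℝ) (2 * r)) := isCompact_iff_compactSpace.mp isCompact_Icc
  have hdist : dist (⟨0, by simp⟩ : ({0, 2 * r} : Set ℝ)) ⟨2 * r, by simp⟩ = 2 * r := by
    simp [Subtype.dist_eq, Real.dist_eq, abs_of_pos hr]
  have hdis : ∀ R' : Set (({0, 2 * r} : Set ℝ) × Icc (0 : ℝ) (2 * r)),
      IsCorrespondence R' → distortion R' = 2 * r := fun R' hR' =>
    (distortion_eq_dist_of_forall_eq_or_eq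
      (fun ⟨_, hx⟩ => hx.imp (fun h => Subtype.ext h) (fun h => Subtype.ext h))
      (fun y y' => by
        rw [hdist, Subtype.dist_eq]
        simpa using Real.dist_le_of_mem_Icc y.2 y'.2) hR').trans hdist
  refine ⟨hdis R hR, le_antisymm ?_ (le_of_forall_gt_imp_ge_of_dense fun δ hδ => ?_)⟩
  · calc _ ≤ hausdorffDist ({0, 2 * r} : Set ℝ) (Icc 0 (2 * r)) :=
          ghDist_le_hausdorffDist_of_subsets
      _ ≤ (2 * r - 0) / 2 := Real.hausdorffDist_pair_Icc_le (by linarith)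
      _ = distortion R / 2 := by rw [hdis R hR, sub_zero]
  · obtain ⟨R', hR', hR'δ⟩ := exists_isCorrespondence_distortion_le_of_ghDist_lt hδ
    linarith [hdis R' hR', hdis R hR]
end
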